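/- Two-rarefaction approximation overestimates: Assume 1 < γ ≤ 5/3 and φ(p_min) < 0, where φ(p) = f(p,L) + f(p,R) + u_R − u_L is the pressure function of the Riemann problem and φ_R(p) is obtained by using the rarefaction branch for both states. Then the unique root p̃* of φ_R satisfies p* < p̃*, where p* is the unique root of φ. -/

import Mathlib

/-!
Below `min pL pR` both waves are rarefactions, so `φ` and `φR` coincide there and
`φ (min pL pR) < 0` places `p*` above `min pL pR`, where at least one wave is a shock. As `φR` is
strictly increasing, it suffices that a rarefaction branch lies strictly below the shock branch
beyond its reference pressure `pZ`. In the variable `t = p / pZ`, with `μ = (γ - 1) / (γ + 1)`,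
both branches are the same positive multiple of
`(1 + μ) / μ * (t ^ (μ / (1 + μ)) - 1)` and `(t - 1) * √((1 + μ) / (t + μ))`.
These agree at `t = 1`; comparing their derivatives on a logarithmic scale reduces to
`(t - 1) * ((1 - μ) * t - 2 * μ * (1 + 2 * μ)) > 0`, which holds for `t > 1` because `γ ≤ 5 / 3`
means `μ ≤ 1 / 4`.
-/

open Real Set

lemma pos_of_hasDerivAt_pos_of_eq_zero {f f' : ℝ → ℝ} {a t : ℝ}
    (hf : ∀ x, a ≤ x → HasDerivAt f (f' x) x) (hf' : ∀ x, a < x → 0 < f' x)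
    (ha : f a = 0) (ht : a < t) : 0 < f t := by
  have hmono : StrictMonoOn f (Ici a) := by
    refine strictMonoOn_of_deriv_pos (convex_Ici a)
      (fun x hx => (hf x hx).continuousAt.continuousWithinAt) fun x hx => ?_
    rw [interior_Ici] at hx
    rw [(hf x (le_of_lt hx)).deriv]
    exact hf' x hx
  simpa [ha] using hmono self_mem_Ici ht.le ht

noncomputable section ScaledWaves

variable {μ s t : ℝ}

def scaledRarefaction (μ t : ℝ) : ℝ := (1 + μ) / μ * (t ^ (μ / (1 + μ)) - 1)

def scaledShock (μ t : ℝ) : ℝ := (t - 1) * √((1 + μ) / (t + μ))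

lemma hasDerivAt_scaledRarefaction (hμ : 0 < μ) (hs : 0 < s) :
    HasDerivAt (scaledRarefaction μ) (s ^ (μ / (1 + μ) - 1)) s := by
  have := ((hasDerivAt_rpow_const (p := μ / (1 + μ)) (Or.inl hs.ne')).sub_const 1).const_mul
    ((1 + μ) / μ)
  exact this.congr_deriv (by field_simp)

lemma hasDerivAt_scaledShock (hμ : 0 ≤ 1 + μ) (hs : 0 < s + μ) :
    HasDerivAt (scaledShock μ) (√(1 + μ) * (s + 1 + 2 * μ) / (2 * (s + μ) * √(s + μ))) s := by
  have hsqrt : HasDerivAt (fun x => √(x + μ)) (1 / (2 * √(s + μ))) s := by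
    simpa using ((hasDerivAt_id s).add_const μ).sqrt hs.ne'
  have hq := (((hasDerivAt_id s).sub_const 1).div hsqrt (by positivity)).const_mul √(1 + μ)
  have hfun : scaledShock μ = fun x => √(1 + μ) * ((x - 1) / √(x + μ)) := by
    funext x
    rw [scaledShock, sqrt_div hμ]
    ring
  rw [hfun]
  refine hq.congr_deriv ?_
  have h2 : √(s + μ) ^ 2 = s + μ := sq_sqrt hs.le
  have h3 : 0 < √(s + μ) := sqrt_pos.2 hs
  simp only [id]
  field_simp
  rw [h2]
  ring

lemma scaledRarefaction_deriv_lt_scaledShock_deriv (hμ0 : 0 < μ) (hμ4 : μ ≤ 1 / 4) (hs : 1 < s) :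
    s ^ (μ / (1 + μ) - 1) < √(1 + μ) * (s + 1 + 2 * μ) / (2 * (s + μ) * √(s + μ)) := by
  have h1μ : 0 < 1 + μ := by linarith
  have hs0 : 0 < s := by linarith
  set D : ℝ → ℝ := fun x => log x / (1 + μ) + log (1 + μ) / 2 + log (x + 1 + 2 * μ) - log 2
    - 3 / 2 * log (x + μ) with hD
  have hD_pos : 0 < D s := by
    refine pos_of_hasDerivAt_pos_of_eq_zero (a := 1) (f' := fun x => (x - 1) *
      ((1 - μ) * x - 2 * μ * (1 + 2 * μ)) / (2 * (1 + μ) * x * (x + μ) * (x + 1 + 2 * μ)))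
      (fun x hx => ?_) (fun x hx => ?_) ?_ hs
    · have hx0 : 0 < x := by linarith
      refine ((((((hasDerivAt_log hx0.ne').div_const (1 + μ)).add_const _).add
        (((hasDerivAt_id x).add_const _).add_const _ |>.log (by positivity))).sub_const _).sub
        ((((hasDerivAt_id x).add_const μ).log (by positivity)).const_mul (3 / 2))).congr_deriv ?_
      simp only [id]
      field_simp
      ring
    · have hx0 : 0 < x := by linarith
      exact div_pos (mul_pos (by linarith) (by nlinarith)) (by positivity)
    · simp only [hD, log_one, zero_div, zero_add]
      rw [show (1 : ℝ) + 1 + 2 * μ = 2 * (1 + μ) by ring, log_mul two_ne_zero h1μ.ne']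
      ring
  rw [rpow_def_of_pos hs0, ← lt_log_iff_exp_lt (by positivity), log_div (by positivity)
    (by positivity), log_mul (by positivity) (by positivity), log_mul (by positivity)
    (by positivity), log_mul (by positivity) (by positivity), log_sqrt h1μ.le,
    log_sqrt (by positivity)]
  have : log s * (μ / (1 + μ) - 1) = -(log s / (1 + μ)) := by field_simp; ring
  rw [this]
  simp only [hD] at hD_pos
  linarith

lemma scaledRarefaction_lt_scaledShock (hμ0 : 0 < μ) (hμ4 : μ ≤ 1 / 4) (ht : 1 < t) :
    scaledRarefaction μ t < scaledShock μ t := by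
  refine sub_pos.1 <| pos_of_hasDerivAt_pos_of_eq_zero
    (f := fun s => scaledShock μ s - scaledRarefaction μ s)
    (fun s hs => (hasDerivAt_scaledShock (by linarith) (by linarith)).sub
      (hasDerivAt_scaledRarefaction hμ0 (by linarith)))
    (fun s hs => sub_pos.2 (scaledRarefaction_deriv_lt_scaledShock_deriv hμ0 hμ4 hs))
    (by simp [scaledShock, scaledRarefaction]) ht

end ScaledWaves

noncomputable section WaveCurves

variable {γ b ρ pZ a p : ℝ}

def rarefactionBranch (γ b ρ pZ a p : ℝ) : ℝ :=
  2 * a * (1 - b * ρ) / (γ - 1) * ((p / pZ) ^ ((γ - 1) / (2 * γ)) - 1)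

def shockBranch (γ b ρ pZ p : ℝ) : ℝ :=
  (p - pZ) * √(2 * (1 - b * ρ) / ((γ + 1) * ρ) / (p + (γ - 1) / (γ + 1) * pZ))

-- The paper's `f(p, Z)`.
def waveCurve (γ b ρ pZ a p : ℝ) : ℝ :=
  if pZ ≤ p then shockBranch γ b ρ pZ p else rarefactionBranch γ b ρ pZ a p

lemma waveCurve_eq_rarefactionBranch (hpZ : pZ ≠ 0) (hp : p ≤ pZ) :
    waveCurve γ b ρ pZ a p = rarefactionBranch γ b ρ pZ a p := by
  rw [waveCurve]
  split_ifs with h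
  · obtain rfl : p = pZ := le_antisymm hp h
    simp [shockBranch, rarefactionBranch, hpZ]
  · rfl

lemma rarefactionBranch_strictMonoOn (hγ : 1 < γ) (ha : 0 < a) (hcov : 0 < 1 - b * ρ)
    (hpZ : 0 < pZ) : StrictMonoOn (rarefactionBranch γ b ρ pZ a) (Ioi 0) := by
  intro x hx y hy hxy
  have hc : 0 < 2 * a * (1 - b * ρ) / (γ - 1) := div_pos (by positivity) (by linarith)
  have hθ : 0 < (γ - 1) / (2 * γ) := div_pos (by linarith) (by linarith)
  refine mul_lt_mul_of_pos_left (sub_lt_sub_right ?_ 1) hc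
  exact rpow_lt_rpow (div_pos hx hpZ).le (div_lt_div_of_pos_right hxy hpZ) hθ

lemma rarefactionBranch_eq_mul_scaledRarefaction (hγ : 1 < γ) (hρ : 0 < ρ) (hpZ : 0 < pZ)
    (hcov : 0 < 1 - b * ρ) (ha : a = √(γ * pZ / (ρ * (1 - b * ρ)))) :
    rarefactionBranch γ b ρ pZ a p =
      √((1 - b * ρ) * pZ / (γ * ρ)) * scaledRarefaction ((γ - 1) / (γ + 1)) (p / pZ) := by
  have hγ0 : 0 < γ := by linarith
  have hγ_add_one : γ + 1 ≠ 0 := by linarith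
  have ha_cov : a * (1 - b * ρ) = γ * √((1 - b * ρ) * pZ / (γ * ρ)) :=
    calc a * (1 - b * ρ) = √(γ * pZ / (ρ * (1 - b * ρ)) * (1 - b * ρ) ^ 2) := by
          rw [sqrt_mul (by positivity), sqrt_sq hcov.le, ha]
      _ = √(γ ^ 2 * ((1 - b * ρ) * pZ / (γ * ρ))) := by
          congr 1
          field_simp
      _ = γ * √((1 - b * ρ) * pZ / (γ * ρ)) := by rw [sqrt_mul (sq_nonneg γ), sqrt_sq hγ0.le]
  have hcoef : 2 * a * (1 - b * ρ) / (γ - 1)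
      = √((1 - b * ρ) * pZ / (γ * ρ)) * ((1 + (γ - 1) / (γ + 1)) / ((γ - 1) / (γ + 1))) := by
    rw [mul_assoc 2, ha_cov]
    field_simp
    ring
  have hexp : (γ - 1) / (γ + 1) / (1 + (γ - 1) / (γ + 1)) = (γ - 1) / (2 * γ) := by
    rw [show 1 + (γ - 1) / (γ + 1) = 2 * γ / (γ + 1) by field_simp; ring,
      div_div_div_cancel_right₀ hγ_add_one]
  rw [rarefactionBranch, scaledRarefaction, hexp, hcoef, mul_assoc]

lemma shockBranch_eq_mul_scaledShock (hγ : 1 < γ) (hρ : 0 < ρ) (hpZ : 0 < pZ)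
    (hcov : 0 < 1 - b * ρ) (hp : 0 ≤ p) :
    shockBranch γ b ρ pZ p =
      √((1 - b * ρ) * pZ / (γ * ρ)) * scaledShock ((γ - 1) / (γ + 1)) (p / pZ) := by
  have hγ0 : 0 < γ := by linarith
  have hμ : 0 < (γ - 1) / (γ + 1) := div_pos (by linarith) (by linarith)
  have hp' : 0 < p + (γ - 1) / (γ + 1) * pZ := by positivity
  rw [shockBranch, scaledShock, ← mul_assoc, mul_comm √_, mul_assoc, ← sqrt_mul (by positivity),
    show p - pZ = pZ * (p / pZ - 1) by field_simp, mul_comm pZ, mul_assoc]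
  congr 1
  rw [← sqrt_sq hpZ.le, ← sqrt_mul (sq_nonneg _), sqrt_sq hpZ.le]
  congr 1
  field_simp
  ring

lemma rarefactionBranch_lt_shockBranch (hγ1 : 1 < γ) (hγ2 : γ ≤ 5 / 3) (hρ : 0 < ρ)
    (hpZ : 0 < pZ) (hcov : 0 < 1 - b * ρ) (ha : a = √(γ * pZ / (ρ * (1 - b * ρ))))
    (hp : pZ < p) :
    rarefactionBranch γ b ρ pZ a p < shockBranch γ b ρ pZ p := by
  rw [rarefactionBranch_eq_mul_scaledRarefaction hγ1 hρ hpZ hcov ha,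
    shockBranch_eq_mul_scaledShock hγ1 hρ hpZ hcov (hpZ.trans hp).le]
  have hμ0 : 0 < (γ - 1) / (γ + 1) := div_pos (by linarith) (by linarith)
  have hμ4 : (γ - 1) / (γ + 1) ≤ 1 / 4 := by rw [div_le_iff₀ (by linarith)]; linarith
  exact mul_lt_mul_of_pos_left
    (scaledRarefaction_lt_scaledShock hμ0 hμ4 ((one_lt_div hpZ).2 hp)) (sqrt_pos.2 (by positivity))

lemma rarefactionBranch_lt_waveCurve (hγ1 : 1 < γ) (hγ2 : γ ≤ 5 / 3) (hρ : 0 < ρ)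
    (hpZ : 0 < pZ) (hcov : 0 < 1 - b * ρ) (ha : a = √(γ * pZ / (ρ * (1 - b * ρ))))
    (hp : pZ < p) :
    rarefactionBranch γ b ρ pZ a p < waveCurve γ b ρ pZ a p := by
  rw [waveCurve, if_pos hp.le]
  exact rarefactionBranch_lt_shockBranch hγ1 hγ2 hρ hpZ hcov ha hp

lemma rarefactionBranch_le_waveCurve (hγ1 : 1 < γ) (hγ2 : γ ≤ 5 / 3) (hρ : 0 < ρ)
    (hpZ : 0 < pZ) (hcov : 0 < 1 - b * ρ) (ha : a = √(γ * pZ / (ρ * (1 - b * ρ)))) :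
    rarefactionBranch γ b ρ pZ a p ≤ waveCurve γ b ρ pZ a p := by
  rcases lt_or_ge pZ p with hp | hp
  · exact (rarefactionBranch_lt_waveCurve hγ1 hγ2 hρ hpZ hcov ha hp).le
  · rw [waveCurve_eq_rarefactionBranch hpZ.ne' hp]

end WaveCurves

theorem stmt_15_general (γ b ρL ρR uL uR pL pR aL aR pstar ptilde : ℝ) (φ φR : ℝ → ℝ)
    (hγ1 : 1 < γ) (hγ2 : γ ≤ 5/3)
    (hρL : 0 < ρL) (hρR : 0 < ρR) (hpL : 0 < pL) (hpR : 0 < pR)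
    (hcovL0 : 0 < 1 - b * ρL)
    (hcovR0 : 0 < 1 - b * ρR)
    (haL : aL = Real.sqrt (γ * pL / (ρL * (1 - b * ρL))))
    (haR : aR = Real.sqrt (γ * pR / (ρR * (1 - b * ρR))))
    (hφ : ∀ p, φ p =
      (if pL ≤ p then
          (p - pL) * Real.sqrt (2 * (1 - b * ρL) / ((γ + 1) * ρL) /
            (p + (γ - 1) / (γ + 1) * pL))
        else
          2 * aL * (1 - b * ρL) / (γ - 1) * ((p / pL) ^ ((γ - 1) / (2 * γ)) - 1)) +
      (if pR ≤ p then
          (p - pR) * Real.sqrt (2 * (1 - b * ρR) / ((γ + 1) * ρR) /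
            (p + (γ - 1) / (γ + 1) * pR))
        else
          2 * aR * (1 - b * ρR) / (γ - 1) * ((p / pR) ^ ((γ - 1) / (2 * γ)) - 1)) +
      uR - uL)
    (hφR : ∀ p, φR p =
      2 * aL * (1 - b * ρL) / (γ - 1) * ((p / pL) ^ ((γ - 1) / (2 * γ)) - 1) +
      2 * aR * (1 - b * ρR) / (γ - 1) * ((p / pR) ^ ((γ - 1) / (2 * γ)) - 1) +
      uR - uL)
    (hmin : φ (min pL pR) < 0)
    (hpstar : 0 < pstar) (hpstar0 : φ pstar = 0)
    (hptilde : 0 < ptilde) (hptilde0 : φR ptilde = 0) :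
    pstar < ptilde := by
  have hφ' : ∀ p, φ p = waveCurve γ b ρL pL aL p + waveCurve γ b ρR pR aR p + uR - uL := hφ
  have hφR' : ∀ p, φR p =
      rarefactionBranch γ b ρL pL aL p + rarefactionBranch γ b ρR pR aR p + uR - uL := hφR
  have haL0 : 0 < aL := haL ▸ sqrt_pos.2 (by positivity)
  have haR0 : 0 < aR := haR ▸ sqrt_pos.2 (by positivity)
  have hmono : StrictMonoOn φR (Ioi 0) := fun x hx y hy hxy => by
    rw [hφR', hφR']
    linarith [rarefactionBranch_strictMonoOn hγ1 haL0 hcovL0 hpL hx hy hxy,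
      rarefactionBranch_strictMonoOn hγ1 haR0 hcovR0 hpR hx hy hxy]
  have hagree : ∀ p, p ≤ min pL pR → φ p = φR p := fun p hp => by
    rw [hφ', hφR', waveCurve_eq_rarefactionBranch hpL.ne' (hp.trans (min_le_left _ _)),
      waveCurve_eq_rarefactionBranch hpR.ne' (hp.trans (min_le_right _ _))]
  have hmin_lt : min pL pR < pstar := by
    by_contra! h
    have := (hmono.le_iff_le hpstar (lt_min hpL hpR : 0 < min pL pR)).2 h
    linarith [hagree _ h, hagree _ le_rfl]
  have hφR_pstar : φR pstar < 0 := by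
    rw [← hpstar0, hφ', hφR']
    rcases min_lt_iff.1 hmin_lt with hL | hR
    · linarith [rarefactionBranch_lt_waveCurve hγ1 hγ2 hρL hpL hcovL0 haL hL,
        rarefactionBranch_le_waveCurve (p := pstar) hγ1 hγ2 hρR hpR hcovR0 haR]
    · linarith [rarefactionBranch_le_waveCurve (p := pstar) hγ1 hγ2 hρL hpL hcovL0 haL,
        rarefactionBranch_lt_waveCurve hγ1 hγ2 hρR hpR hcovR0 haR hR]
  exact (hmono.lt_iff_lt hpstar hptilde).1 (hφR_pstar.trans_eq hptilde0.symm)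

theorem stmt_15 (γ b ρL ρR uL uR pL pR aL aR pstar ptilde : ℝ) (φ φR : ℝ → ℝ)
    (hγ1 : 1 < γ) (hγ2 : γ ≤ 5/3) (hb : 0 ≤ b)
    (hρL : 0 < ρL) (hρR : 0 < ρR) (hpL : 0 < pL) (hpR : 0 < pR)
    (hcovL0 : 0 < 1 - b * ρL) (hcovL1 : 1 - b * ρL < 1)
    (hcovR0 : 0 < 1 - b * ρR) (hcovR1 : 1 - b * ρR < 1)
    (haL : aL = Real.sqrt (γ * pL / (ρL * (1 - b * ρL))))
    (haR : aR = Real.sqrt (γ * pR / (ρR * (1 - b * ρR))))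
    (hφ : ∀ p, φ p =
      (if pL ≤ p then
          (p - pL) * Real.sqrt (2 * (1 - b * ρL) / ((γ + 1) * ρL) /
            (p + (γ - 1) / (γ + 1) * pL))
        else
          2 * aL * (1 - b * ρL) / (γ - 1) * ((p / pL) ^ ((γ - 1) / (2 * γ)) - 1)) +
      (if pR ≤ p then
          (p - pR) * Real.sqrt (2 * (1 - b * ρR) / ((γ + 1) * ρR) /
            (p + (γ - 1) / (γ + 1) * pR))
        else
          2 * aR * (1 - b * ρR) / (γ - 1) * ((p / pR) ^ ((γ - 1) / (2 * γ)) - 1)) +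
      uR - uL)
    (hφR : ∀ p, φR p =
      2 * aL * (1 - b * ρL) / (γ - 1) * ((p / pL) ^ ((γ - 1) / (2 * γ)) - 1) +
      2 * aR * (1 - b * ρR) / (γ - 1) * ((p / pR) ^ ((γ - 1) / (2 * γ)) - 1) +
      uR - uL)
    (hmin : φ (min pL pR) < 0)
    (hpstar : 0 < pstar) (hpstar0 : φ pstar = 0)
    (hptilde : 0 < ptilde) (hptilde0 : φR ptilde = 0) :
    pstar < ptilde :=
  stmt_15_general γ b ρL ρR uL uR pL pR aL aR pstar ptilde φ φR hγ1 hγ2 hρL hρR hpL hpR hcovL0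
    hcovR0 haL haR hφ hφR hmin hpstar hpstar0 hptilde hptilde0
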